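/- With the setting above (aug(A,S) a core), let N be the set of maps h : S → D with π_1∘h = id_S extendable to homomorphisms A → D, let N' be the set of maps h : S → D with (π_1∘h)(S) = S extendable to homomorphisms A → D, and let I be the set of maps g : S → S extendable to automorphisms of A. Then N' = { f ∘ g : f ∈ N, g ∈ I } and |N'| = |N| · |I|. -/
import Mathlib


structure Vocab where
  symb : Type
  ar : symb → ℕ

structure Struct (τ : Vocab) (V : Type) where
  rel : ∀ R : τ.symb, Set ((Fin (τ.ar R)) → V)

def IsHom {τ : Vocab} {V W : Type} (A : Struct τ V) (B : Struct τ W) (h : V → W) : Prop :=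
  ∀ R t, t ∈ A.rel R → (fun i => h (t i)) ∈ B.rel R

def HomEquiv {τ : Vocab} {V W : Type} (A : Struct τ V) (B : Struct τ W) : Prop :=
  (∃ h, IsHom A B h) ∧ (∃ h, IsHom B A h)

structure Substruct {τ : Vocab} {V : Type} (A : Struct τ V) where
  carrier : Set V
  rel : ∀ R : τ.symb, Set ((Fin (τ.ar R)) → V)
  rel_sub : ∀ R, rel R ⊆ A.rel R
  mem_carrier : ∀ R t, t ∈ rel R → ∀ i, t i ∈ carrier

def Substruct.toStruct {τ : Vocab} {V : Type} {A : Struct τ V} (B : Substruct A) :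
    Struct τ B.carrier :=
  ⟨fun R => {t | (fun i => (t i : V)) ∈ B.rel R}⟩

def Substruct.Proper {τ : Vocab} {V : Type} {A : Struct τ V} (B : Substruct A) : Prop :=
  ¬ (B.carrier = Set.univ ∧ ∀ R, B.rel R = A.rel R)

def IsCore {τ : Vocab} {V : Type} (A : Struct τ V) : Prop :=
  ∀ B : Substruct A, B.Proper → ¬ HomEquiv A B.toStruct

def IsCoreOf {τ : Vocab} {V : Type} {A : Struct τ V} (B : Substruct A) : Prop :=
  HomEquiv A B.toStruct ∧ IsCore B.toStruct

def Isomorphic {τ : Vocab} {V W : Type} (A : Struct τ V) (B : Struct τ W) : Prop :=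
  ∃ e : V ≃ W, IsHom A B e ∧ IsHom B A e.symm

def homSet {τ : Vocab} {V W : Type} (A : Struct τ V) (B : Struct τ W) (S : Set V) :
    Set (S → W) :=
  {h | ∃ h' : V → W, IsHom A B h' ∧ ∀ a : S, h' a = h a}

def augVocab (τ : Vocab) (V : Type) : Vocab := ⟨τ.symb ⊕ V, Sum.elim τ.ar fun _ => 1⟩

def aug {τ : Vocab} {V : Type} (A : Struct τ V) (S : Set V) : Struct (augVocab τ V) V :=
  ⟨fun R => match R with
    | Sum.inl R' => A.rel R'
    | Sum.inr a => {t | a ∈ S ∧ ∀ i, t i = a}⟩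

def Dset {τ : Vocab} {V W : Type} (B : Struct (augVocab τ V) W) : Set (V × W) :=
  {p | (fun _ => p.2) ∈ B.rel (Sum.inr p.1)}

def Dstruct {τ : Vocab} {V W : Type} (A : Struct τ V) (B : Struct (augVocab τ V) W) :
    Struct τ (Dset B) :=
  ⟨fun R => {t | (fun i => (t i).val.1) ∈ A.rel R ∧
                 (fun i => (t i).val.2) ∈ B.rel (Sum.inl R)}⟩

def Nset {τ : Vocab} {V W : Type} (A : Struct τ V) (S : Set V)
    (B : Struct (augVocab τ V) W) : Set (S → Dset B) :=
  {h ∈ homSet A (Dstruct A B) S | ∀ a : S, (h a).val.1 = ↑a}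

def N'set {τ : Vocab} {V W : Type} (A : Struct τ V) (S : Set V)
    (B : Struct (augVocab τ V) W) : Set (S → Dset B) :=
  {h ∈ homSet A (Dstruct A B) S | Set.range (fun a : S => (h a).val.1) = S}

def Iset {τ : Vocab} {V : Type} (A : Struct τ V) (S : Set V) : Set (S → S) :=
  {g | ∃ e : V ≃ V, IsHom A A ⇑e ∧ IsHom A A ⇑e.symm ∧ ∀ a : S, e ↑a = ↑(g a)}

lemma isHom_comp {τ : Vocab} {U V W : Type} {A : Struct τ U} {B : Struct τ V} {C : Struct τ W}
    {f : U → V} {g : V → W} (hf : IsHom A B f) (hg : IsHom B C g) :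
    IsHom A C (g ∘ f) := fun R t ht => hg R _ (hf R t ht)

lemma isHom_iterate {τ : Vocab} {V : Type} {A : Struct τ V} {f : V → V}
    (hf : IsHom A A f) (n : ℕ) : IsHom A A (f^[n]) := by
  induction n with
  | zero => exact fun R t ht => ht
  | succ n ih => rw [Function.iterate_succ]; exact isHom_comp hf ih

lemma core_inj {τ : Vocab} {V : Type} [Fintype V] {C : Struct τ V} (hc : IsCore C)
    {e : V → V} (he : IsHom C C e) : Function.Injective e := by
  by_contra hinj
  set Bs : Substruct C :=
    { carrier := Set.range e
      rel := fun R => (fun t => e ∘ t) '' C.rel R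
      rel_sub := fun R t ht => by
        obtain ⟨t', ht', rfl⟩ := ht
        exact he R t' ht'
      mem_carrier := fun R t ht i => by
        obtain ⟨t', ht', rfl⟩ := ht
        exact ⟨t' i, rfl⟩ } with hBs
  refine hc Bs ?_ ?_
  · rintro ⟨hcar, -⟩
    apply hinj
    have hru : Set.range e = Set.univ := hcar
    exact Finite.injective_iff_surjective.2 (Set.range_eq_univ.1 hru)
  · constructor
    · exact ⟨fun v => ⟨e v, ⟨v, rfl⟩⟩, fun R t ht => ⟨t, ht, rfl⟩⟩
    · exact ⟨fun v => v.val, fun R t ht => Bs.rel_sub R ht⟩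

lemma hom_inv {τ : Vocab} {V : Type} [Fintype V] {A : Struct τ V} {e : V → V}
    (hb : Function.Bijective e) (he : IsHom A A e) :
    ∃ σ : V ≃ V, ⇑σ = e ∧ IsHom A A ⇑σ.symm := by
  classical
  let σ : Equiv.Perm V := Equiv.ofBijective e hb
  have hσ : ⇑σ = e := rfl
  refine ⟨σ, hσ, ?_⟩
  have hn : 0 < orderOf σ := orderOf_pos σ
  have h1 : σ ^ (orderOf σ - 1) * σ = 1 := by
    rw [← pow_succ, Nat.sub_add_cancel hn, pow_orderOf_eq_one]
  have hinv : σ⁻¹ = σ ^ (orderOf σ - 1) := inv_eq_of_mul_eq_one_left h1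
  have hcoe : ⇑σ.symm = e^[orderOf σ - 1] := by
    show ⇑σ⁻¹ = _
    rw [hinv, Equiv.Perm.coe_pow, hσ]
  rw [hcoe]
  exact isHom_iterate he _

theorem stmt10 {τ : Vocab} {V W : Type} [Fintype V] [Fintype W]
    (A : Struct τ V) (S : Set V) (B : Struct (augVocab τ V) W)
    (hcore : IsCore (aug A S)) :
    N'set A S B = {h | ∃ f ∈ Nset A S B, ∃ g ∈ Iset A S, h = f ∘ g} ∧
    (N'set A S B).ncard = (Nset A S B).ncard * (Iset A S).ncard := by
  classical
  have hIbij : ∀ g ∈ Iset A S, Function.Bijective g := by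
    rintro g ⟨e, he, he', hgS⟩
    have hinj : Function.Injective g := by
      intro a b hab
      apply Subtype.ext
      apply e.injective
      rw [hgS a, hgS b, hab]
    exact Finite.injective_iff_bijective.1 hinj
  have hcomp : ∀ f ∈ Nset A S B, ∀ g ∈ Iset A S, f ∘ g ∈ N'set A S B := by
    rintro f ⟨⟨hf', hf'hom, hf'ext⟩, hfN⟩ g hgI
    obtain ⟨e, he, he', hgS⟩ := hgI
    refine ⟨⟨hf' ∘ ⇑e, isHom_comp he hf'hom, ?_⟩, ?_⟩
    · intro a
      show hf' (e ↑a) = f (g a)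
      rw [hgS a, hf'ext (g a)]
    · have hbij := hIbij g ⟨e, he, he', hgS⟩
      ext v
      constructor
      · rintro ⟨a, rfl⟩
        show ((f (g a) : Dset B) : V × W).1 ∈ S
        rw [hfN (g a)]
        exact (g a).2
      · intro hv
        obtain ⟨a, ha⟩ := hbij.2 ⟨v, hv⟩
        refine ⟨a, ?_⟩
        show ((f (g a) : Dset B) : V × W).1 = v
        rw [hfN (g a), ha]
  have hdec : ∀ h ∈ N'set A S B, ∃ f ∈ Nset A S B, ∃ g ∈ Iset A S, h = f ∘ g := by
    rintro h ⟨⟨h', h'hom, h'ext⟩, hrange⟩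
    set p : V → V := fun v => ((h' v : Dset B) : V × W).1 with hp
    have hphom : IsHom A A p := fun R t ht => (h'hom R t ht).1
    have hpa : ∀ a : S, p ↑a = ((h a : Dset B) : V × W).1 := fun a => by
      show ((h' ↑a : Dset B) : V × W).1 = _
      rw [h'ext a]
    have hpS : ∀ a : S, p ↑a ∈ S := fun a => by
      rw [hpa a, ← hrange]; exact ⟨a, rfl⟩
    set q : S → S := fun a => ⟨p ↑a, hpS a⟩ with hq
    have hqsurj : Function.Surjective q := by
      intro b
      have hb : (b : V) ∈ Set.range (fun a : S => ((h a : Dset B) : V × W).1) := by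
        rw [hrange]; exact b.2
      obtain ⟨a, ha⟩ := hb
      refine ⟨a, Subtype.ext ?_⟩
      show p ↑a = ↑b
      rw [hpa a]
      exact ha
    have hqbij : Function.Bijective q := Finite.surjective_iff_bijective.1 hqsurj
    set ρ : Equiv.Perm S := Equiv.ofBijective q hqbij with hρ
    set m := orderOf ρ with hmdef
    have hm : ∀ a : S, q^[m] a = a := fun a => by
      have h1 : ρ ^ m = 1 := pow_orderOf_eq_one ρ
      calc q^[m] a = (ρ ^ m) a := rfl
        _ = a := by rw [h1]; rfl
    have hpm : ∀ (k : ℕ) (a : S), p^[k] ↑a = ↑(q^[k] a) := by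
      intro k
      induction k with
      | zero => intro a; rfl
      | succ k ih =>
        intro a
        rw [Function.iterate_succ_apply, Function.iterate_succ_apply]
        have hqa : p ↑a = ↑(q a) := rfl
        rw [hqa]
        exact ih (q a)
    have hfix : ∀ a : S, p^[m] ↑a = ↑a := fun a => by rw [hpm m a, hm a]
    have haug : IsHom (aug A S) (aug A S) (p^[m]) := by
      intro R t ht
      match R with
      | Sum.inl R' => exact isHom_iterate hphom m R' t ht
      | Sum.inr a =>
        obtain ⟨haS, hta⟩ := ht
        refine ⟨haS, fun i => ?_⟩
        show p^[m] (t i) = a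
        rw [hta i]
        exact hfix ⟨a, haS⟩
    have hpminj := core_inj hcore haug
    have hpinj : Function.Injective p := by
      have hmpos : 0 < m := hmdef ▸ orderOf_pos ρ
      have h1 : p^[m] = p^[m - 1] ∘ p := by
        conv_lhs => rw [← Nat.succ_pred_eq_of_pos hmpos]
        exact Function.iterate_succ p (m - 1)
      rw [h1] at hpminj
      exact Function.Injective.of_comp hpminj
    have hpbij : Function.Bijective p := Finite.injective_iff_bijective.1 hpinj
    obtain ⟨σ, hσ, hσsymm⟩ := hom_inv hpbij hphom
    set ginv : S → S := fun a => (Equiv.ofBijective q hqbij).symm a with hginvdef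
    have hgg : ∀ a, q (ginv a) = a := fun a => (Equiv.ofBijective q hqbij).apply_symm_apply a
    have hgg' : ∀ a, ginv (q a) = a := fun a => (Equiv.ofBijective q hqbij).symm_apply_apply a
    refine ⟨h ∘ ginv, ⟨⟨h' ∘ ⇑σ.symm, isHom_comp hσsymm h'hom, ?_⟩, ?_⟩, q,
      ⟨σ, by rw [hσ]; exact hphom, hσsymm, fun a => by rw [hσ]⟩, ?_⟩
    · intro a
      have h2 : σ.symm ↑a = ↑(ginv a) := by
        rw [Equiv.symm_apply_eq, hσ]
        exact (congrArg Subtype.val (hgg a)).symm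
      show h' (σ.symm ↑a) = h (ginv a)
      rw [h2, h'ext (ginv a)]
    · intro a
      show ((h (ginv a) : Dset B) : V × W).1 = ↑a
      rw [← hpa (ginv a)]
      exact congrArg Subtype.val (hgg a)
    · funext a
      exact (congrArg h (hgg' a)).symm
  have hEq : N'set A S B = {h | ∃ f ∈ Nset A S B, ∃ g ∈ Iset A S, h = f ∘ g} := by
    ext h
    constructor
    · exact fun hh => hdec h hh
    · rintro ⟨f, hf, g, hg, rfl⟩
      exact hcomp f hf g hg
  refine ⟨hEq, ?_⟩
  have himg : {h : S → Dset B | ∃ f ∈ Nset A S B, ∃ g ∈ Iset A S, h = f ∘ g}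
      = (fun pq : (S → Dset B) × (S → S) => pq.1 ∘ pq.2) '' (Nset A S B ×ˢ Iset A S) := by
    ext h
    constructor
    · rintro ⟨f, hf, g, hg, rfl⟩; exact ⟨(f, g), ⟨hf, hg⟩, rfl⟩
    · rintro ⟨⟨f, g⟩, ⟨hf, hg⟩, rfl⟩; exact ⟨f, hf, g, hg, rfl⟩
  have hinjOn : Set.InjOn (fun pq : (S → Dset B) × (S → S) => pq.1 ∘ pq.2)
      (Nset A S B ×ˢ Iset A S) := by
    rintro ⟨f₁, g₁⟩ ⟨hf₁, hg₁⟩ ⟨f₂, g₂⟩ ⟨hf₂, hg₂⟩ hfg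
    simp only at hfg
    have hg12 : g₁ = g₂ := by
      funext a
      apply Subtype.ext
      have hca := congrFun hfg a
      have h1 := hf₁.2 (g₁ a)
      have h2 := hf₂.2 (g₂ a)
      rw [← h1, ← h2]
      exact congrArg (fun x : Dset B => (x : V × W).1) hca
    subst hg12
    have hbij := hIbij g₁ hg₁
    have hf12 : f₁ = f₂ := by
      funext a
      obtain ⟨b, rfl⟩ := hbij.2 a
      exact congrFun hfg b
    rw [hf12]
  rw [hEq, himg, Set.ncard_image_of_injOn hinjOn,
      ← Nat.card_coe_set_eq, ← Nat.card_coe_set_eq, ← Nat.card_coe_set_eq,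
      Nat.card_congr (Equiv.Set.prod _ _), Nat.card_prod]
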